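/- arXiv:1012.3218 — 3 statements merged into one kernel-verified Lean document; each statement's English description precedes it below -/
import Mathlib

section
/- Let $-1<m<0$, $R_0>0$, $\eta>0$, and let $f$ be a $C^2$ solution of $(f'/f^{1-m})' + \frac{1}{1+m}f - \frac{m}{1+m} r f' = 0$ with $f>0$ on $[0,R_0)$, $f(0)=\eta$, $f'(0)=0$. Then $f(r) - m r f'(r) > 0$ for all $r \in [0,R_0)$. -/
/-!
Write `v = f ^ m / m`, so that `v' = f' / f ^ (1 - m)`, and `φ = r v' - v` (`scalingDefect m f`).
Then `f - m r f' = -m f ^ (1 - m) φ`, and the equation turns into the linear first-order equation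
`φ' = r v'' = c φ` with `c = m r f ^ (1 - m) / (1 + m)`. Since `φ 0 = -η ^ m / m > 0` and `c` is
bounded on compact subintervals, Grönwall's inequality (run backwards from a putative zero)
shows that `φ` never vanishes, so it stays positive.
-/

open Set

lemma eq_zero_left_of_hasDerivAt_mul_self {φ c : ℝ → ℝ} {a b K : ℝ} (hab : a ≤ b)
    (hφ : ContinuousOn φ (Icc a b)) (hφ' : ∀ t ∈ Ioc a b, HasDerivAt φ (c t * φ t) t)
    (hc : ∀ t ∈ Ioc a b, |c t| ≤ K) (hb : φ b = 0) : φ a = 0 := by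
  have hψ : ContinuousOn (fun s => φ (-s)) (Icc (-b) (-a)) :=
    hφ.comp continuous_neg.continuousOn fun s hs => ⟨by linarith [hs.2], by linarith [hs.1]⟩
  have hψ' : ∀ s ∈ Ico (-b) (-a),
      HasDerivWithinAt (fun s => φ (-s)) (-(c (-s) * φ (-s))) (Ici s) s := by
    intro s hs
    have ht : -s ∈ Ioc a b := ⟨by linarith [hs.2], by linarith [hs.1]⟩
    exact ((hφ' (-s) ht).scomp s (hasDerivAt_neg s)).hasDerivWithinAt.congr_deriv (by simp)
  have hbound : ∀ s ∈ Ico (-b) (-a), ‖-(c (-s) * φ (-s))‖ ≤ K * ‖φ (-s)‖ := by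
    intro s hs
    rw [norm_neg, norm_mul]
    exact mul_le_mul_of_nonneg_right (hc (-s) ⟨by linarith [hs.2], by linarith [hs.1]⟩)
      (norm_nonneg _)
  simpa using eq_zero_of_abs_deriv_le_mul_abs_self_of_eq_zero_right hψ hψ'
    (by simpa using hb) hbound (-a) ⟨by linarith, le_rfl⟩

lemma pos_of_hasDerivAt_mul_self {φ c : ℝ → ℝ} {a b K : ℝ}
    (hφ : ContinuousOn φ (Icc a b)) (hφ' : ∀ t ∈ Ioc a b, HasDerivAt φ (c t * φ t) t)
    (hc : ∀ t ∈ Ioc a b, |c t| ≤ K) (ha : 0 < φ a) : ∀ t ∈ Icc a b, 0 < φ t := by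
  intro t ht
  by_contra! hφt
  obtain ⟨t₀, ht₀, hφt₀⟩ :=
    intermediate_value_Icc' ht.1 (hφ.mono (Icc_subset_Icc_right ht.2)) ⟨hφt, ha.le⟩
  have hsub : Icc a t₀ ⊆ Icc a b := Icc_subset_Icc_right (ht₀.2.trans ht.2)
  have hsub' : Ioc a t₀ ⊆ Ioc a b := Ioc_subset_Ioc_right (ht₀.2.trans ht.2)
  exact ha.ne' (eq_zero_left_of_hasDerivAt_mul_self ht₀.1 (hφ.mono hsub)
    (fun s hs => hφ' s (hsub' hs)) (fun s hs => hc s (hsub' hs)) hφt₀)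

noncomputable def scalingDefect (m : ℝ) (f : ℝ → ℝ) (r : ℝ) : ℝ :=
  r * (deriv f r / f r ^ (1 - m)) - f r ^ m / m

lemma sub_mul_deriv_eq_scalingDefect {m : ℝ} (hm : m ≠ 0) {f : ℝ → ℝ} {r : ℝ}
    (hf : 0 < f r) :
    f r - m * r * deriv f r = -m * f r ^ (1 - m) * scalingDefect m f r := by
  have hsplit : f r ^ (1 - m) * f r ^ m = f r := by
    rw [← Real.rpow_add hf]; norm_num
  have hA : f r ^ (1 - m) ≠ 0 := (Real.rpow_pos_of_pos hf _).ne'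
  rw [scalingDefect]
  field_simp
  linear_combination (-1) * hsplit

lemma hasDerivAt_scalingDefect {m : ℝ} (hm : m ≠ 0) (hm1 : 1 + m ≠ 0) {f : ℝ → ℝ} {t : ℝ}
    (hf : DifferentiableAt ℝ f t) (hft : 0 < f t)
    (hG : HasDerivAt (fun s => deriv f s / f s ^ (1 - m))
      (m / (1 + m) * t * deriv f t - 1 / (1 + m) * f t) t) :
    HasDerivAt (scalingDefect m f)
      (m * t * f t ^ (1 - m) / (1 + m) * scalingDefect m f t) t := by
  have hsplit : f t ^ (1 - m) * f t ^ m = f t := by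
    rw [← Real.rpow_add hft]; norm_num
  have hA : f t ^ (1 - m) ≠ 0 := (Real.rpow_pos_of_pos hft _).ne'
  have hv : HasDerivAt (fun s => f s ^ m / m) (deriv f t / f t ^ (1 - m)) t := by
    refine ((hf.hasDerivAt.rpow_const (p := m) (Or.inl hft.ne')).div_const m).congr_deriv ?_
    rw [show m - 1 = -(1 - m) by ring, Real.rpow_neg hft.le]
    field_simp
  refine (((hasDerivAt_id t).mul hG).sub hv).congr_deriv ?_
  simp only [scalingDefect, id]
  field_simp
  linear_combination f t ^ (1 - m) * t * hsplit

lemma continuousOn_scalingDefect {m R : ℝ} {f : ℝ → ℝ} (hf : ContDiffOn ℝ 1 f (Ico 0 R))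
    (hpos : ∀ r ∈ Ico 0 R, 0 < f r) : ContinuousOn (scalingDefect m f) (Ico 0 R) := by
  -- `deriv f` agrees with the continuous `derivWithin f (Ico 0 R)` except at `0`,
  -- where the factor `r` kills it.
  have heq : EqOn (fun r => r * (derivWithin f (Ico 0 R) r / f r ^ (1 - m)) - f r ^ m / m)
      (scalingDefect m f) (Ico 0 R) := by
    intro r hr
    rcases hr.1.eq_or_lt with rfl | hr0
    · simp [scalingDefect]
    · dsimp only
      rw [scalingDefect, derivWithin_of_mem_nhds (Ico_mem_nhds hr0 hr.2)]
  refine ContinuousOn.congr ?_ heq.symm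
  have hfc := hf.continuousOn
  refine (continuousOn_id.mul ((hf.continuousOn_derivWithin (uniqueDiffOn_Ico 0 R) le_rfl).div
    (hfc.rpow_const fun r hr => Or.inl (hpos r hr).ne')
    fun r hr => (Real.rpow_pos_of_pos (hpos r hr) _).ne')).sub
    ((hfc.rpow_const fun r hr => Or.inl (hpos r hr).ne').div_const m)

lemma hasDerivAt_scalingDefect_of_ode {m R : ℝ} (hm : m ≠ 0) (hm1 : 1 + m ≠ 0) {f : ℝ → ℝ}
    (hf : ContDiffOn ℝ 2 f (Ico 0 R)) {t : ℝ} (ht : t ∈ Ioo 0 R) (hft : 0 < f t)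
    (hode : deriv (fun s => deriv f s / f s ^ (1 - m)) t
      + (1 / (1 + m)) * f t - (m / (1 + m)) * t * deriv f t = 0) :
    HasDerivAt (scalingDefect m f) (m * t * f t ^ (1 - m) / (1 + m) * scalingDefect m f t) t := by
  have hf₂ : ContDiffAt ℝ 2 f t := hf.contDiffAt (Ico_mem_nhds ht.1 ht.2)
  have hf₁ : DifferentiableAt ℝ f t := hf₂.differentiableAt two_ne_zero
  have hf' : DifferentiableAt ℝ (deriv f) t :=
    (hf₂.derivWithin (m := 1) (by norm_num)).differentiableAt one_ne_zero
  have hG : DifferentiableAt ℝ (fun s => deriv f s / f s ^ (1 - m)) t :=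
    hf'.div (hf₁.rpow_const (Or.inl hft.ne')) (Real.rpow_pos_of_pos hft _).ne'
  exact hasDerivAt_scalingDefect hm hm1 hf₁ hft (hG.hasDerivAt.congr_deriv (by linarith))

theorem stmt_0_general (m R0 η : ℝ) (hm1 : -1 < m) (hm0 : m < 0) (hη : 0 < η)
    (f : ℝ → ℝ) (hf : ContDiffOn ℝ 2 f (Ico 0 R0))
    (hpos : ∀ r ∈ Ico (0:ℝ) R0, 0 < f r)
    (hode : ∀ r ∈ Ico (0:ℝ) R0,
      deriv (fun s => deriv f s / f s ^ (1 - m)) r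
        + (1 / (1 + m)) * f r - (m / (1 + m)) * r * deriv f r = 0)
    (hf0 : f 0 = η) :
    ∀ r ∈ Ico (0:ℝ) R0, 0 < f r - m * r * deriv f r := by
  have hm : m ≠ 0 := hm0.ne
  have hm1' : 1 + m ≠ 0 := by linarith
  have h0 : 0 < scalingDefect m f 0 := by
    simp only [scalingDefect, zero_mul, zero_sub, hf0, neg_pos]
    exact div_neg_of_pos_of_neg (Real.rpow_pos_of_pos hη m) hm0
  intro r hr
  have hsub : Icc 0 r ⊆ Ico 0 R0 := Icc_subset_Ico_right hr.2
  obtain ⟨K, hK⟩ := isCompact_Icc.exists_bound_of_continuousOn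
    (f := fun t => m * t * f t ^ (1 - m) / (1 + m))
    (((continuousOn_const.mul continuousOn_id).mul ((hf.continuousOn.mono hsub).rpow_const
      fun t ht => Or.inl (hpos t (hsub ht)).ne')).div_const (1 + m))
  have hr' : 0 < scalingDefect m f r :=
    pos_of_hasDerivAt_mul_self
      ((continuousOn_scalingDefect (hf.of_le (by norm_num)) hpos).mono hsub)
      (fun t ht => hasDerivAt_scalingDefect_of_ode hm hm1' hf ⟨ht.1, ht.2.trans_lt hr.2⟩
        (hpos t (hsub (Ioc_subset_Icc_self ht))) (hode t (hsub (Ioc_subset_Icc_self ht))))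
      (fun t ht => hK t (Ioc_subset_Icc_self ht)) h0 r ⟨hr.1, le_rfl⟩
  rw [sub_mul_deriv_eq_scalingDefect hm (hpos r hr)]
  exact mul_pos (mul_pos (neg_pos.mpr hm0) (Real.rpow_pos_of_pos (hpos r hr) _)) hr'

theorem stmt_0 (m R0 η : ℝ) (hm1 : -1 < m) (hm0 : m < 0) (hR0 : 0 < R0) (hη : 0 < η)
    (f : ℝ → ℝ) (hf : ContDiffOn ℝ 2 f (Ico 0 R0))
    (hpos : ∀ r ∈ Ico (0:ℝ) R0, 0 < f r)
    (hode : ∀ r ∈ Ico (0:ℝ) R0,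
      deriv (fun s => deriv f s / f s ^ (1 - m)) r
        + (1 / (1 + m)) * f r - (m / (1 + m)) * r * deriv f r = 0)
    (hf0 : f 0 = η) (hf'0 : deriv f 0 = 0) :
    ∀ r ∈ Ico (0:ℝ) R0, 0 < f r - m * r * deriv f r :=
  stmt_0_general m R0 η hm1 hm0 hη f hf hpos hode hf0
end

section
/- Let $-1<m<0$, $R_0>0$, $\eta>0$, and let $f$ be a $C^2$ solution of $(f'/f^{1-m})' + \frac{1}{1+m}f - \frac{m}{1+m} r f' = 0$ with $f>0$ on $[0,R_0)$, $f(0)=\eta$, $f'(0)=0$. Then $f'(r)<0$ for all $r\in(0,R_0)$; in particular $f$ is strictly decreasing on $(0,R_0)$. -/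
/-!
Put `G = f' / f^(1-m)`, so that `G(0) = 0` and `G < 0 ⟺ f' < 0`. At any zero of `G` we have
`f' = 0`, and the equation reduces to `G' = -f / (1 + m) < 0`. A continuous function that starts
at `0` and crosses every one of its zeros downwards can never become nonnegative again: it stays
`≤ 0` by real induction, and a zero in the interior would force `G > 0` just to its left.
-/

open Set Filter Topology

theorem HasDerivAt.eventually_nhdsGT_neg {g : ℝ → ℝ} {d x : ℝ} (h : HasDerivAt g d x)
    (hd : d < 0) (hx : g x = 0) : ∀ᶠ y in 𝓝[>] x, g y < 0 := by
  have hslope := ((hasDerivAt_iff_tendsto_slope.mp h).mono_left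
    (nhdsGT_le_nhdsNE x)).eventually_lt_const hd
  filter_upwards [hslope, self_mem_nhdsWithin] with y hy hxy
  rwa [slope_def_field, hx, sub_zero, div_lt_iff₀ (sub_pos.mpr hxy), zero_mul] at hy

theorem HasDerivAt.eventually_nhdsLT_pos {g : ℝ → ℝ} {d x : ℝ} (h : HasDerivAt g d x)
    (hd : d < 0) (hx : g x = 0) : ∀ᶠ y in 𝓝[<] x, 0 < g y := by
  have hslope := ((hasDerivAt_iff_tendsto_slope.mp h).mono_left
    (nhdsLT_le_nhdsNE x)).eventually_lt_const hd
  filter_upwards [hslope, self_mem_nhdsWithin] with y hy hyx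
  rwa [slope_def_field, hx, sub_zero, div_lt_iff_of_neg (sub_neg.mpr hyx), zero_mul] at hy

theorem forall_neg_of_hasDerivAt_neg_at_zeros {g : ℝ → ℝ} {a b : ℝ}
    (hg : ContinuousOn g (Ioo a b)) (ha : g a = 0)
    (hzeros : ∀ x ∈ Ico a b, g x = 0 → ∃ d < 0, HasDerivAt g d x) :
    ∀ x ∈ Ioo a b, g x < 0 := by
  have hcont : ContinuousOn g (Ico a b) := by
    intro x hx
    rcases hx.1.eq_or_lt with rfl | hax
    · obtain ⟨d, -, hd⟩ := hzeros a hx ha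
      exact hd.continuousAt.continuousWithinAt
    · exact (hg.continuousAt (isOpen_Ioo.mem_nhds ⟨hax, hx.2⟩)).continuousWithinAt
  have hnonpos : ∀ x ∈ Ioo a b, Icc a x ⊆ {y | g y ≤ 0} := by
    intro x hx
    refine IsClosed.Icc_subset_of_forall_mem_nhdsWithin ?_ ha.le ?_
    · rw [inter_comm]
      exact ((hcont.mono (Icc_subset_Ico_right hx.2)).preimage_isClosed_of_isClosed
        isClosed_Icc isClosed_Iic)
    · rintro y ⟨hy, hya, hyx⟩
      have hyb : y ∈ Ico a b := ⟨hya, hyx.trans hx.2⟩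
      rcases (show g y ≤ 0 from hy).lt_or_eq with hneg | hzero
      · have hIco : Ico a b ∈ 𝓝[>] y := Ico_mem_nhdsGT_of_mem hyb
        exact (nhdsWithin_le_of_mem hIco) (hcont y hyb (Iic_mem_nhds hneg))
      · obtain ⟨d, hd, hgd⟩ := hzeros y hyb hzero
        exact (hgd.eventually_nhdsGT_neg hd hzero).mono fun z hz => hz.le
  intro x hx
  refine lt_of_le_of_ne (hnonpos x hx ⟨hx.1.le, le_rfl⟩) fun hzero => ?_
  obtain ⟨d, hd, hgd⟩ := hzeros x (Ioo_subset_Ico_self hx) hzero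
  obtain ⟨y, hgy, hy⟩ := ((hgd.eventually_nhdsLT_pos hd hzero).and (Ioo_mem_nhdsLT hx.1)).exists
  exact (hnonpos x hx ⟨hy.1.le, hy.2.le⟩).not_gt hgy

theorem hasDerivAt_deriv_div_rpow_of_deriv_eq_zero {f : ℝ → ℝ} {m r : ℝ} (hm : -1 < m)
    (hode : deriv (fun s => deriv f s / f s ^ (1 - m)) r
        + (1 / (1 + m)) * f r - (m / (1 + m)) * r * deriv f r = 0)
    (hfr : 0 < f r) (hcrit : deriv f r = 0) :
    HasDerivAt (fun s => deriv f s / f s ^ (1 - m)) (-(f r / (1 + m))) r := by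
  have hm' : 0 < 1 + m := by linarith
  have hderiv : deriv (fun s => deriv f s / f s ^ (1 - m)) r = -(f r / (1 + m)) := by
    rw [hcrit, mul_zero, sub_zero] at hode
    field_simp at hode ⊢
    linarith
  -- `deriv` is `0` where `G` is not differentiable, so a nonzero prescribed value forces
  -- differentiability.
  have hne : -(f r / (1 + m)) ≠ 0 := (neg_neg_of_pos (div_pos hfr hm')).ne
  rw [← hderiv] at hne ⊢
  exact (differentiableAt_of_deriv_ne_zero hne).hasDerivAt

theorem stmt_1_general (m R0 : ℝ) (hm1 : -1 < m)
    (f : ℝ → ℝ) (hf : ContDiffOn ℝ 2 f (Ico 0 R0))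
    (hpos : ∀ r ∈ Ico (0:ℝ) R0, 0 < f r)
    (hode : ∀ r ∈ Ico (0:ℝ) R0,
      deriv (fun s => deriv f s / f s ^ (1 - m)) r
        + (1 / (1 + m)) * f r - (m / (1 + m)) * r * deriv f r = 0)
    (hf'0 : deriv f 0 = 0) :
    (∀ r ∈ Ioo (0:ℝ) R0, deriv f r < 0) ∧ StrictAntiOn f (Ioo 0 R0) := by
  set G : ℝ → ℝ := fun s => deriv f s / f s ^ (1 - m) with hG
  have hpow : ∀ r ∈ Ico (0:ℝ) R0, 0 < f r ^ (1 - m) := fun r hr =>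
    Real.rpow_pos_of_pos (hpos r hr) _
  have hfIoo : ContDiffOn ℝ 2 f (Ioo 0 R0) := hf.mono Ioo_subset_Ico_self
  have hGcont : ContinuousOn G (Ioo 0 R0) :=
    (hfIoo.continuousOn_deriv_of_isOpen isOpen_Ioo one_le_two).div
      (hfIoo.continuousOn.rpow_const fun r hr => .inl (hpos r (Ioo_subset_Ico_self hr)).ne')
      fun r hr => (hpow r (Ioo_subset_Ico_self hr)).ne'
  have hzeros : ∀ r ∈ Ico (0:ℝ) R0, G r = 0 → ∃ d < 0, HasDerivAt G d r := by
    intro r hr hGr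
    have hcrit : deriv f r = 0 := by simpa [hG, (hpow r hr).ne'] using hGr
    exact ⟨_, neg_neg_of_pos (div_pos (hpos r hr) (by linarith)),
      hasDerivAt_deriv_div_rpow_of_deriv_eq_zero hm1 (hode r hr) (hpos r hr) hcrit⟩
  have hGneg := forall_neg_of_hasDerivAt_neg_at_zeros hGcont (by simp [hG, hf'0]) hzeros
  have hf'neg : ∀ r ∈ Ioo (0:ℝ) R0, deriv f r < 0 := fun r hr =>
    by simpa [hG, div_lt_iff₀ (hpow r (Ioo_subset_Ico_self hr))] using hGneg r hr
  exact ⟨hf'neg, strictAntiOn_of_deriv_neg (convex_Ioo 0 R0)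
    (hf.continuousOn.mono Ioo_subset_Ico_self) (by rwa [interior_Ioo])⟩

theorem stmt_1 (m R0 η : ℝ) (hm1 : -1 < m) (hm0 : m < 0) (hR0 : 0 < R0) (hη : 0 < η)
    (f : ℝ → ℝ) (hf : ContDiffOn ℝ 2 f (Ico 0 R0))
    (hpos : ∀ r ∈ Ico (0:ℝ) R0, 0 < f r)
    (hode : ∀ r ∈ Ico (0:ℝ) R0,
      deriv (fun s => deriv f s / f s ^ (1 - m)) r
        + (1 / (1 + m)) * f r - (m / (1 + m)) * r * deriv f r = 0)
    (hf0 : f 0 = η) (hf'0 : deriv f 0 = 0) :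
    (∀ r ∈ Ioo (0:ℝ) R0, deriv f r < 0) ∧ StrictAntiOn f (Ioo 0 R0) :=
  stmt_1_general m R0 hm1 f hf hpos hode hf'0
end

section
/- Let $-1<m<0$ and let $f$ be a positive solution on $(0,\infty)$ of $(f'/f^{1-m})' + \frac{1}{1+m}f - \frac{m}{1+m} r f' = 0$ with $f(0)=\eta>0$, $f'(0)=0$, $\int_0^\infty f = \mu$. Set $w(r)=r^{-1/m} f(r)$. Then $w$ satisfies $\big(\frac{w'}{w^{1-m}}\big)' + \frac{2}{r}\,\frac{w'}{w^{1-m}} - \frac{m}{1+m} r^{1/m} w' = 0$ on $(0,\infty)$, and $w'(r)>0$ for all $r>0$. -/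
open Set Filter Topology

/-!
Put `φ = f - m r f'`. Then `w' = -(1/m) r^(-1/m-1) φ`, and the equation for `f` says exactly
`(f'/f^(1-m))' = -φ/(1+m)`. Eliminating `f''` turns this into a linear equation `φ' = b φ` with `b`
continuous on `(0, ∞)`; as `φ(0+) = f(0) > 0`, the integrating factor `exp (-∫ b)` keeps `φ`
positive, whence `w' > 0`. For the equation of `w`, note that
`r² w'/w^(1-m) = -(1/m) f^m + r f'/f^(1-m)`, whose derivative is `r (f'/f^(1-m))' = -r φ/(1+m)`.
-/

theorem pos_of_hasDerivAt_eq_mul_self {I : Set ℝ} (hI : IsOpen I) (hI' : I.OrdConnected)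
    {φ b : ℝ → ℝ} (hb : ContinuousOn b I) (hφ : ∀ s ∈ I, HasDerivAt φ (b s * φ s) s)
    {a : ℝ} (ha : a ∈ I) (hφa : 0 < φ a) {s : ℝ} (hs : s ∈ I) : 0 < φ s := by
  set B : ℝ → ℝ := fun s => ∫ t in a..s, b t
  have hB : ∀ s ∈ I, HasDerivAt B (b s) s := fun s hs =>
    intervalIntegral.integral_hasDerivAt_right
      ((hb.mono (hI'.uIcc_subset ha hs)).intervalIntegrable)
      (hb.stronglyMeasurableAtFilter hI s hs) (hb.continuousAt (hI.mem_nhds hs))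
  have hψ : ∀ s ∈ I, HasDerivAt (fun s => φ s * Real.exp (-B s)) 0 s := fun s hs =>
    ((hφ s hs).mul (hB s hs).neg.exp).congr_deriv (by simp only [Pi.neg_apply]; ring)
  have hconst : φ s * Real.exp (-B s) = φ a * Real.exp (-B a) :=
    hI.is_const_of_deriv_eq_zero hI'.isPreconnected
      (fun x hx => (hψ x hx).differentiableAt.differentiableWithinAt)
      (fun x hx => (hψ x hx).deriv) hs ha
  have : 0 < φ s * Real.exp (-B s) := hconst ▸ by positivity
  exact pos_of_mul_pos_left this (Real.exp_pos _).le

theorem tendsto_mul_deriv_nhdsGT_zero {f : ℝ → ℝ} (hf : ContDiffOn ℝ 1 f (Ici 0)) :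
    Tendsto (fun s => s * deriv f s) (𝓝[>] 0) (𝓝 0) := by
  have hcont : ContinuousWithinAt (derivWithin f (Ici 0)) (Ici 0) 0 :=
    hf.continuousOn_derivWithin (uniqueDiffOn_Ici 0) le_rfl 0 self_mem_Ici
  have h : Tendsto (fun s => s * derivWithin f (Ici 0) s) (𝓝[>] 0)
      (𝓝 (0 * derivWithin f (Ici 0) 0)) :=
    (tendsto_id.mono_left nhdsWithin_le_nhds).mul
      (hcont.mono_left (nhdsWithin_mono 0 Ioi_subset_Ici_self))
  rw [zero_mul] at h
  refine h.congr' ?_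
  filter_upwards [self_mem_nhdsWithin] with s hs
  rw [derivWithin_of_mem_nhds (mem_of_superset (Ioi_mem_nhds hs) Ioi_subset_Ici_self)]

section

variable {m s : ℝ} {f : ℝ → ℝ}

theorem hasDerivAt_deriv_div_rpow (hf : DifferentiableAt ℝ f s)
    (hf' : DifferentiableAt ℝ (deriv f) s) (hfs : 0 < f s) :
    HasDerivAt (fun x => deriv f x / f x ^ (1 - m))
      ((deriv (deriv f) s - (1 - m) * deriv f s ^ 2 / f s) / f s ^ (1 - m)) s := by
  have hA : 0 < f s ^ (1 - m) := by positivity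
  refine (hf'.hasDerivAt.div (hf.hasDerivAt.rpow_const (Or.inl hfs.ne')) hA.ne').congr_deriv ?_
  rw [Real.rpow_sub_one hfs.ne']
  field_simp

theorem hasDerivAt_sub_mul_deriv (hf : DifferentiableAt ℝ f s)
    (hf' : DifferentiableAt ℝ (deriv f) s) (hfs : 0 < f s)
    (hode : deriv (fun x => deriv f x / f x ^ (1 - m)) s
      = -(f s - m * (s * deriv f s)) / (1 + m)) :
    HasDerivAt (fun x => f x - m * (x * deriv f x))
      (((1 - m) * (deriv f s / f s) + m * s * f s ^ (1 - m) / (1 + m))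
        * (f s - m * (s * deriv f s))) s := by
  rw [(hasDerivAt_deriv_div_rpow hf hf' hfs).deriv] at hode
  refine (hf.hasDerivAt.sub (((hasDerivAt_id s).mul hf'.hasDerivAt).const_mul m)).congr_deriv ?_
  simp only [id]
  linear_combination (norm := (field_simp; ring)) (-(m * s) * f s ^ (1 - m)) * hode

theorem hasDerivAt_rpow_neg_inv_mul (hm : m ≠ 0) (hs : s ≠ 0) (hf : DifferentiableAt ℝ f s) :
    HasDerivAt (fun x => x ^ (-(1 / m)) * f x)
      (-(1 / m) * s ^ (-(1 / m) - 1) * (f s - m * (s * deriv f s))) s := by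
  refine ((Real.hasDerivAt_rpow_const (Or.inl hs)).mul hf.hasDerivAt).congr_deriv ?_
  rw [Real.rpow_sub_one hs]
  field_simp
  ring

theorem rpow_eq_div_rpow_one_sub {x : ℝ} (hx : 0 < x) (p : ℝ) : x ^ p = x / x ^ (1 - p) := by
  rw [Real.rpow_sub hx, Real.rpow_one, div_div_cancel₀ hx.ne']

theorem deriv_rpow_neg_inv_mul_div_rpow (hm : m ≠ 0) (hs : 0 < s) (hf : DifferentiableAt ℝ f s)
    (hfs : 0 < f s) :
    deriv (fun x => x ^ (-(1 / m)) * f x) s / (s ^ (-(1 / m)) * f s) ^ (1 - m)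
      = (-(1 / m) * f s ^ m + s * (deriv f s / f s ^ (1 - m))) / s ^ 2 := by
  rw [(hasDerivAt_rpow_neg_inv_mul hm hs.ne' hf).deriv, Real.mul_rpow (by positivity) hfs.le,
    ← Real.rpow_mul hs.le, show -(1 / m) * (1 - m) = -(1 / m) - 1 + 2 by field_simp; ring,
    Real.rpow_add hs, Real.rpow_sub_one hs.ne', Real.rpow_two, rpow_eq_div_rpow_one_sub hfs m]
  field_simp
  ring

theorem hasDerivAt_rpow_add_mul_deriv_div_rpow (hm : m ≠ 0) (hf : DifferentiableAt ℝ f s)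
    (hq : DifferentiableAt ℝ (fun x => deriv f x / f x ^ (1 - m)) s) (hfs : 0 < f s) :
    HasDerivAt (fun x => -(1 / m) * f x ^ m + x * (deriv f x / f x ^ (1 - m)))
      (s * deriv (fun x => deriv f x / f x ^ (1 - m)) s) s := by
  refine (((hf.hasDerivAt.rpow_const (Or.inl hfs.ne')).const_mul _).add
    ((hasDerivAt_id s).mul hq.hasDerivAt)).congr_deriv ?_
  rw [show m - 1 = -(1 - m) by ring, Real.rpow_neg hfs.le]
  simp only [id]
  field_simp
  ring

theorem ContDiffOn.differentiableAt_deriv {U : Set ℝ} (hf : ContDiffOn ℝ 2 f U) (hU : IsOpen U)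
    (hs : s ∈ U) : DifferentiableAt ℝ (deriv f) s :=
  ((hf.deriv_of_isOpen hU (m := 1) le_rfl).differentiableOn one_ne_zero).differentiableAt
    (hU.mem_nhds hs)

theorem sub_mul_deriv_pos (hf : ContDiffOn ℝ 2 f (Ici 0)) (hfpos : ∀ x ∈ Ici (0 : ℝ), 0 < f x)
    (hode : ∀ x ∈ Ioi (0 : ℝ), deriv (fun y => deriv f y / f y ^ (1 - m)) x
      = -(f x - m * (x * deriv f x)) / (1 + m))
    (hs : 0 < s) : 0 < f s - m * (s * deriv f s) := by
  have hC : ContDiffOn ℝ 2 f (Ioi 0) := hf.mono Ioi_subset_Ici_self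
  have hpos : ∀ x ∈ Ioi (0 : ℝ), 0 < f x := fun x hx => hfpos x (Ioi_subset_Ici_self hx)
  have hcont : ContinuousOn (fun x => (1 - m) * (deriv f x / f x) + m * x * f x ^ (1 - m) / (1 + m))
      (Ioi 0) := by
    have hcf := hC.continuousOn
    refine (continuousOn_const.mul ((hC.continuousOn_deriv_of_isOpen isOpen_Ioi one_le_two).div
      hcf fun x hx => (hpos x hx).ne')).add ?_
    exact ((continuousOn_const.mul continuousOn_id).mul
      (hcf.rpow_const fun x hx => Or.inl (hpos x hx).ne')).div_const _
  have hlim : Tendsto (fun x => f x - m * (x * deriv f x)) (𝓝[>] 0) (𝓝 (f 0)) := by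
    simpa using ((hf.continuousOn 0 self_mem_Ici).mono Ioi_subset_Ici_self).tendsto.sub
      ((tendsto_mul_deriv_nhdsGT_zero (hf.of_le one_le_two)).const_mul m)
  obtain ⟨a, hφa, ha⟩ :=
    ((hlim.eventually (eventually_gt_nhds (hfpos 0 self_mem_Ici))).and self_mem_nhdsWithin).exists
  refine pos_of_hasDerivAt_eq_mul_self (φ := fun x => f x - m * (x * deriv f x)) isOpen_Ioi
    ordConnected_Ioi hcont (fun x hx => ?_) ha hφa hs
  exact hasDerivAt_sub_mul_deriv
    ((hC.differentiableOn two_ne_zero).differentiableAt (isOpen_Ioi.mem_nhds hx))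
    (hC.differentiableAt_deriv isOpen_Ioi hx) (hpos x hx) (hode x hx)

theorem flux_ode_rpow_neg_inv_mul (hm : m ≠ 0) (hf : ∀ x ∈ Ioi (0 : ℝ), DifferentiableAt ℝ f x)
    (hfpos : ∀ x ∈ Ioi (0 : ℝ), 0 < f x) {r : ℝ} (hr : 0 < r)
    (hq : DifferentiableAt ℝ (fun x => deriv f x / f x ^ (1 - m)) r)
    (hode : deriv (fun x => deriv f x / f x ^ (1 - m)) r
      = -(f r - m * (r * deriv f r)) / (1 + m)) :
    deriv (fun s => deriv (fun x => x ^ (-(1 / m)) * f x) s / (s ^ (-(1 / m)) * f s) ^ (1 - m)) r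
      + (2 / r) * (deriv (fun x => x ^ (-(1 / m)) * f x) r / (r ^ (-(1 / m)) * f r) ^ (1 - m))
      - (m / (1 + m)) * r ^ (1 / m) * deriv (fun x => x ^ (-(1 / m)) * f x) r = 0 := by
  have hflux : (fun s => deriv (fun x => x ^ (-(1 / m)) * f x) s / (s ^ (-(1 / m)) * f s) ^ (1 - m))
      =ᶠ[𝓝 r] fun s => (-(1 / m) * f s ^ m + s * (deriv f s / f s ^ (1 - m))) / s ^ 2 := by
    filter_upwards [isOpen_Ioi.mem_nhds hr] with s hs
    exact deriv_rpow_neg_inv_mul_div_rpow hm hs (hf s hs) (hfpos s hs)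
  have hQ := (hasDerivAt_rpow_add_mul_deriv_div_rpow hm (hf r hr) hq (hfpos r hr)).div
    (hasDerivAt_pow 2 r) (by positivity) |>.congr_of_eventuallyEq hflux
  rw [hQ.deriv, deriv_rpow_neg_inv_mul_div_rpow hm hr (hf r hr) (hfpos r hr),
    (hasDerivAt_rpow_neg_inv_mul hm hr.ne' (hf r hr)).deriv, hode, Real.rpow_sub_one hr.ne',
    Real.rpow_neg hr.le, rpow_eq_div_rpow_one_sub (hfpos r hr) m]
  have : 0 < f r := hfpos r hr
  field_simp
  ring

end

theorem stmt_6_general (m : ℝ) (hm0 : m < 0)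
    (f : ℝ → ℝ) (hfsmooth : ContDiffOn ℝ 2 f (Ici 0))
    (hfpos : ∀ r ∈ Ici (0:ℝ), 0 < f r)
    (hode : ∀ r ∈ Ioi (0:ℝ),
      deriv (fun s => deriv f s / f s ^ (1 - m)) r
        + (1 / (1 + m)) * f r - (m / (1 + m)) * r * deriv f r = 0)
    (w : ℝ → ℝ) (hwdef : ∀ r, w r = r ^ (-(1 / m)) * f r) :
    (∀ r ∈ Ioi (0:ℝ),
      deriv (fun s => deriv w s / w s ^ (1 - m)) r
        + (2 / r) * (deriv w r / w r ^ (1 - m))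
        - (m / (1 + m)) * r ^ (1 / m) * deriv w r = 0) ∧
    (∀ r > (0:ℝ), 0 < deriv w r) := by
  obtain rfl : w = fun r => r ^ (-(1 / m)) * f r := funext hwdef
  have hC : ContDiffOn ℝ 2 f (Ioi 0) := hfsmooth.mono Ioi_subset_Ici_self
  have hd : ∀ s ∈ Ioi (0 : ℝ), DifferentiableAt ℝ f s := fun s hs =>
    (hC.differentiableOn two_ne_zero).differentiableAt (isOpen_Ioi.mem_nhds hs)
  have hpos : ∀ s ∈ Ioi (0 : ℝ), 0 < f s := fun s hs => hfpos s (Ioi_subset_Ici_self hs)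
  have hflux : ∀ s ∈ Ioi (0 : ℝ), deriv (fun x => deriv f x / f x ^ (1 - m)) s
      = -(f s - m * (s * deriv f s)) / (1 + m) := fun s hs => by
    linear_combination hode s hs
  refine ⟨fun r hr => ?_, fun r hr => ?_⟩
  · exact flux_ode_rpow_neg_inv_mul hm0.ne hd hpos hr
      (hasDerivAt_deriv_div_rpow (hd r hr) (hC.differentiableAt_deriv isOpen_Ioi hr)
        (hpos r hr)).differentiableAt (hflux r hr)
  · rw [(hasDerivAt_rpow_neg_inv_mul hm0.ne hr.ne' (hd r hr)).deriv]
    have hcoef : 0 < -(1 / m) := neg_pos.2 (one_div_neg.2 hm0)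
    exact mul_pos (mul_pos hcoef (Real.rpow_pos_of_pos hr _))
      (sub_mul_deriv_pos hfsmooth hfpos hflux hr)

theorem stmt_6 (m η μ : ℝ) (hm1 : -1 < m) (hm0 : m < 0) (hη : 0 < η) (hμ : 0 < μ)
    (f : ℝ → ℝ) (hfsmooth : ContDiffOn ℝ 2 f (Ici 0))
    (hfpos : ∀ r ∈ Ici (0:ℝ), 0 < f r)
    (hode : ∀ r ∈ Ioi (0:ℝ),
      deriv (fun s => deriv f s / f s ^ (1 - m)) r
        + (1 / (1 + m)) * f r - (m / (1 + m)) * r * deriv f r = 0)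
    (hf0 : f 0 = η) (hf'0 : deriv f 0 = 0)
    (hmass : (∫ r in Ioi (0:ℝ), f r) = μ)
    (w : ℝ → ℝ) (hwdef : ∀ r, w r = r ^ (-(1 / m)) * f r) :
    (∀ r ∈ Ioi (0:ℝ),
      deriv (fun s => deriv w s / w s ^ (1 - m)) r
        + (2 / r) * (deriv w r / w r ^ (1 - m))
        - (m / (1 + m)) * r ^ (1 / m) * deriv w r = 0) ∧
    (∀ r > (0:ℝ), 0 < deriv w r) :=
  stmt_6_general m hm0 f hfsmooth hfpos hode w hwdef
end
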